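/- If M is a maximal ideal of B₁(X), then Z_B[M] = {Z(f) : f ∈ M} is a Z_B-ultrafilter on X. -/

import Mathlib

open Filter Topology

/-- A function `f : X → ℝ` is Baire one if it is a pointwise limit of a
sequence of continuous functions. -/
def IsBaireOne {X : Type*} [TopologicalSpace X] (f : X → ℝ) : Prop :=
  ∃ F : ℕ → C(X, ℝ), ∀ x, Tendsto (fun n => F n x) atTop (𝓝 (f x))

/-- The ring `B₁(X)` of real valued Baire one functions on `X`, as a subring
of the ring of all functions `X → ℝ`. -/
def B1 (X : Type*) [TopologicalSpace X] : Subring (X → ℝ) where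
  carrier := {f | IsBaireOne f}
  zero_mem' := ⟨fun _ => 0, fun x => by simpa using tendsto_const_nhds⟩
  one_mem' := ⟨fun _ => 1, fun x => by simpa using tendsto_const_nhds⟩
  add_mem' := by
    rintro f g ⟨F, hF⟩ ⟨G, hG⟩
    exact ⟨fun n => F n + G n, fun x => by simpa using (hF x).add (hG x)⟩
  mul_mem' := by
    rintro f g ⟨F, hF⟩ ⟨G, hG⟩
    exact ⟨fun n => F n * G n, fun x => by simpa using (hF x).mul (hG x)⟩
  neg_mem' := by
    rintro f ⟨F, hF⟩
    exact ⟨fun n => -F n, fun x => by simpa using (hF x).neg⟩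

variable {X : Type*} [TopologicalSpace X]

/-- The constant function with value `r`, as an element of `B₁(X)`. -/
def bconst (X : Type*) [TopologicalSpace X] (r : ℝ) : B1 X :=
  ⟨fun _ => r, ⟨fun _ => ContinuousMap.const X r, fun x => by simpa using tendsto_const_nhds⟩⟩

theorem babs_mem (f : B1 X) : (fun x => |(f : X → ℝ) x|) ∈ B1 X := by
  obtain ⟨F, hF⟩ := f.2
  exact ⟨fun n => ⟨fun x => |F n x|, (F n).continuous.abs⟩, fun x => (hF x).abs⟩

/-- The absolute value `|f|` of a Baire one function. -/
def babs (f : B1 X) : B1 X := ⟨fun x => |(f : X → ℝ) x|, babs_mem f⟩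

/-- The zero set `Z(f)` of `f ∈ B₁(X)`. -/
def zset (f : B1 X) : Set X := {x | (f : X → ℝ) x = 0}

/-- `Z(B₁(X))`, the family of all zero sets of Baire one functions on `X`. -/
def zsets (X : Type*) [TopologicalSpace X] : Set (Set X) := {Z | ∃ f : B1 X, zset f = Z}

/-- `Z_B[I] = {Z(f) : f ∈ I}` for an ideal `I` of `B₁(X)`. -/
def zbi (I : Ideal (B1 X)) : Set (Set X) := {Z | ∃ f ∈ I, zset f = Z}

/-- A `Z_B`-filter on `X`: a nonempty family of zero sets of Baire one functions,
not containing `∅`, closed under finite intersections and upward closed in `Z(B₁(X))`. -/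
def IsZBFilter (F : Set (Set X)) : Prop :=
  F.Nonempty ∧ F ⊆ zsets X ∧ ∅ ∉ F ∧
    (∀ Z₁ ∈ F, ∀ Z₂ ∈ F, Z₁ ∩ Z₂ ∈ F) ∧
    (∀ Z ∈ F, ∀ Z' ∈ zsets X, Z ⊆ Z' → Z' ∈ F)

/-- A `Z_B`-ultrafilter on `X`: a maximal `Z_B`-filter. -/
def IsZBUltrafilter (U : Set (Set X)) : Prop :=
  IsZBFilter U ∧ ∀ F : Set (Set X), IsZBFilter F → U ⊆ F → F = U

/-- The finite intersection property: every nonempty finite subfamily has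
nonempty intersection. -/
def FIP {X : Type*} (B : Set (Set X)) : Prop :=
  ∀ S : Finset (Set X), ↑S ⊆ B → S.Nonempty → (⋂₀ (S : Set (Set X))).Nonempty

/-- An ideal `I` of `B₁(X)` is a `Z_B`-ideal if `Z_B⁻¹[Z_B[I]] = I`. -/
def IsZBIdeal (I : Ideal (B1 X)) : Prop :=
  ∀ f : B1 X, zset f ∈ zbi I → f ∈ I

/-- An ideal of `B₁(X)` is fixed if the zero sets of its members have a common point. -/
def FixedIdeal (I : Ideal (B1 X)) : Prop :=
  (⋂ f ∈ (I : Set (B1 X)), zset f).Nonempty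

/-- A prime `Z_B`-filter. -/
def IsPrimeZBFilter (F : Set (Set X)) : Prop :=
  IsZBFilter F ∧ ∀ Z₁ ∈ zsets X, ∀ Z₂ ∈ zsets X, Z₁ ∪ Z₂ ∈ F → Z₁ ∈ F ∨ Z₂ ∈ F

/-- `M(f) ≥ 0` in the quotient `B₁(X)/M`: the coset contains a nonnegative function. -/
def QNonneg (M : Ideal (B1 X)) (a : B1 X ⧸ M) : Prop :=
  ∃ g : B1 X, (∀ x, 0 ≤ (g : X → ℝ) x) ∧ Ideal.Quotient.mk M g = a

/-- `M(f) > 0` in the quotient `B₁(X)/M`. -/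
def QPos (M : Ideal (B1 X)) (a : B1 X ⧸ M) : Prop := QNonneg M a ∧ a ≠ 0

/-- A maximal ideal `M` of `B₁(X)` is real if the canonical copy of `ℝ`
(via constant functions) is all of `B₁(X)/M`. -/
def RealIdeal (M : Ideal (B1 X)) : Prop :=
  Function.Surjective (fun r : ℝ => Ideal.Quotient.mk M (bconst X r))

/-- An `F_σ` subset: a countable union of closed sets. -/
def IsFSigma {X : Type*} [TopologicalSpace X] (s : Set X) : Prop :=
  ∃ F : ℕ → Set X, (∀ n, IsClosed (F n)) ∧ s = ⋃ n, F n

/-!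
`Z_B[M]` is a `Z_B`-filter because `Z(f² + g²) = Z(f) ∩ Z(g)`, `Z(gf) = Z(g) ∪ Z(f)`, and a
Baire one function without zeros is a unit of `B₁(X)`. It is maximal because for `g ∉ M`
maximality gives `ag + m = 1` with `m ∈ M`, so `Z(m) ∩ Z(g) = ∅` and no `Z_B`-filter contains
both `Z_B[M]` and `Z(g)`.
-/

/-- The approximants `F n / (F n ^ 2 + 1/(n+1))` have nonvanishing denominators and tend to
`f / f ^ 2` pointwise. -/
lemma IsBaireOne.inv {f : X → ℝ} (hf : IsBaireOne f) (hf₀ : ∀ x, f x ≠ 0) :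
    IsBaireOne f⁻¹ := by
  obtain ⟨F, hF⟩ := hf
  refine ⟨fun n => ⟨fun x => F n x / (F n x ^ 2 + 1 / (n + 1)), ?_⟩, fun x => ?_⟩
  · exact (F n).continuous.div (((F n).continuous.pow 2).add continuous_const)
      fun x => by positivity
  · have hden : Tendsto (fun n : ℕ => F n x ^ 2 + 1 / ((n : ℝ) + 1)) atTop (𝓝 (f x ^ 2)) := by
      simpa using ((hF x).pow 2).add tendsto_one_div_add_atTop_nhds_zero_nat
    convert (hF x).div hden (pow_ne_zero 2 (hf₀ x)) using 2
    · rfl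
    · rw [Pi.inv_apply, pow_two, div_mul_cancel_left₀ (hf₀ x)]

lemma zset_zero : zset (0 : B1 X) = Set.univ := by
  ext x; simp [zset]

lemma zset_mul (f g : B1 X) : zset (f * g) = zset f ∪ zset g := by
  ext x; simp [zset]

lemma zset_mul_self_add_mul_self (f g : B1 X) : zset (f * f + g * g) = zset f ∩ zset g := by
  ext x
  simp only [zset, Set.mem_ofPred_eq, Set.mem_inter_iff, Subring.coe_add, Subring.coe_mul,
    Pi.add_apply, Pi.mul_apply]
  exact mul_self_add_mul_self_eq_zero

lemma isUnit_of_zset_eq_empty {f : B1 X} (hf : zset f = ∅) : IsUnit f := by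
  have hf₀ : ∀ x, (f : X → ℝ) x ≠ 0 := fun x hx => (hf ▸ hx : x ∈ (∅ : Set X))
  refine isUnit_iff_exists_inv.mpr ⟨⟨_, IsBaireOne.inv f.2 hf₀⟩, Subtype.ext ?_⟩
  funext x
  exact mul_inv_cancel₀ (hf₀ x)

lemma zset_inter_eq_empty_of_mul_add_eq_one {a g m : B1 X} (h : a * g + m = 1) :
    zset m ∩ zset g = ∅ := by
  refine Set.eq_empty_of_forall_notMem fun x ⟨hm, hg⟩ => ?_
  have hx := congrFun (congrArg Subtype.val h) x
  simp only [Subring.coe_add, Subring.coe_mul, Pi.add_apply, Pi.mul_apply] at hx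
  simp_all [zset]

lemma zbi_isZBFilter {I : Ideal (B1 X)} (hI : I ≠ ⊤) : IsZBFilter (zbi I) := by
  refine ⟨⟨Set.univ, 0, I.zero_mem, zset_zero⟩, ?_, ?_, ?_, ?_⟩
  · rintro _ ⟨f, -, rfl⟩
    exact ⟨f, rfl⟩
  · rintro ⟨f, hf, hZ⟩
    exact hI (I.eq_top_of_isUnit_mem hf (isUnit_of_zset_eq_empty hZ))
  · rintro _ ⟨f, hf, rfl⟩ _ ⟨g, hg, rfl⟩
    exact ⟨f * f + g * g, I.add_mem (I.mul_mem_left f hf) (I.mul_mem_left g hg),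
      zset_mul_self_add_mul_self f g⟩
  · rintro _ ⟨f, hf, rfl⟩ _ ⟨g, rfl⟩ hfg
    exact ⟨g * f, I.mul_mem_left g hf, by rw [zset_mul, Set.union_eq_left.mpr hfg]⟩

lemma exists_mem_zset_inter_eq_empty {M : Ideal (B1 X)} (hM : M.IsMaximal) {g : B1 X}
    (hg : g ∉ M) : ∃ m ∈ M, zset m ∩ zset g = ∅ := by
  obtain ⟨a, m, hm, h⟩ := hM.exists_inv hg
  exact ⟨m, hm, zset_inter_eq_empty_of_mul_add_eq_one h⟩

/-- If `M` is a maximal ideal of `B₁(X)` then `Z_B[M]` is a `Z_B`-ultrafilter. -/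
theorem zbi_isZBUltrafilter {X : Type*} [TopologicalSpace X]
    (M : Ideal (B1 X)) (hM : M.IsMaximal) : IsZBUltrafilter (zbi M) := by
  refine ⟨zbi_isZBFilter hM.ne_top, fun F hF hMF => (hMF.antisymm ?_).symm⟩
  rintro Z hZ
  obtain ⟨g, rfl⟩ := hF.2.1 hZ
  by_contra hgM
  obtain ⟨m, hm, hmg⟩ := exists_mem_zset_inter_eq_empty hM fun hg => hgM ⟨g, hg, rfl⟩
  exact hF.2.2.1 (hmg ▸ hF.2.2.2.1 _ (hMF ⟨m, hm, rfl⟩) _ hZ)
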